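/- arXiv:2101.10023 — 4 statements merged into one kernel-verified Lean document; each statement's English description precedes it below -/
import Mathlib

section
/- Sphere reduction of the two equation systems: let y₁,…,y_p be distinct points on the unit sphere in ℝᵐ and v₁,…,v_p real numbers. If for every i one has Σ_{j≠i} (y_i - y_j)/|y_i - y_j|³ · v_j = 0 (vector equation), then for every i also Σ_{j≠i} v_j/|y_i - y_j| = 0. -/
open RealInnerProductSpace


open Finset in
theorem stmt_3 (m p : ℕ) (y : Fin p → EuclideanSpace ℝ (Fin m))
    (hinj : Function.Injective y) (hnorm : ∀ i, ‖y i‖ = 1)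
    (v : Fin p → ℝ)
    (h : ∀ i, ∑ j ∈ univ \ {i}, (v j / ‖y i - y j‖ ^ 3) • (y i - y j) = 0) :
    ∀ i, ∑ j ∈ univ \ {i}, v j / ‖y i - y j‖ = 0 := by
  intro i
  have h0 : (⟪∑ j ∈ univ \ {i}, (v j / ‖y i - y j‖ ^ 3) • (y i - y j), y i⟫) = 0 := by
    rw [h i, inner_zero_left]
  rw [sum_inner] at h0
  have key : ∀ j ∈ univ \ {i},
      ⟪(v j / ‖y i - y j‖ ^ 3) • (y i - y j), y i⟫ = v j / ‖y i - y j‖ / 2 := by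
    intro j hj
    have hji : j ≠ i := by simpa using hj
    have hne : y i - y j ≠ 0 := sub_ne_zero.mpr (fun hh => hji (hinj hh.symm))
    have hn : ‖y i - y j‖ ≠ 0 := norm_ne_zero_iff.mpr hne
    have hsq : ‖y i - y j‖ ^ 2 = 2 - 2 * ⟪y i, y j⟫ := by
      rw [norm_sub_sq_real, hnorm i, hnorm j]; ring
    have hinner : ⟪y i - y j, y i⟫ = ‖y i - y j‖ ^ 2 / 2 := by
      rw [inner_sub_left, real_inner_self_eq_norm_sq, hnorm i, hsq,
        real_inner_comm]; ring
    rw [real_inner_smul_left, hinner]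
    field_simp
  rw [Finset.sum_congr rfl key] at h0
  have : ∑ j ∈ univ \ {i}, v j / ‖y i - y j‖
      = 2 * ∑ j ∈ univ \ {i}, v j / ‖y i - y j‖ / 2 := by
    rw [Finset.mul_sum]; apply Finset.sum_congr rfl; intros; ring
  rw [this, h0, mul_zero]
end

section
/- Kelvin transform identity for the vector system: let N ∈ ℝᵐ, x₁,…,x_p distinct points all different from N, y_i' = (x_i - N)/|x_i - N|², v_i = |y_i'| u_i. If (u₁,…,u_p) satisfies both Σ_{j≠i} u_j/|x_i - x_j| = 0 and u_i Σ_{j≠i} (x_i - x_j)/|x_i - x_j|³ · u_j = 0 for all i, then (v₁,…,v_p) satisfies Σ_{j≠i} v_j/|y_i' - y_j'| = 0 and v_i Σ_{j≠i} (y_i' - y_j')/|y_i' - y_j'|³ · v_j = 0 for all i. -/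
/-! The inversion `ι x = N + (x - N) / ‖x - N‖²` in the unit sphere about `N` scales distances,
`‖ι x - ι x'‖ = ‖x - x'‖ / (‖x - N‖ * ‖x' - N‖)`, and `v j = u j / ‖x j - N‖`. Hence every term of
the first sum for `v` is `‖x i - N‖` times the corresponding term for `u`. In the second system
each transformed term is `‖x i - N‖³` times the original term plus a multiple of `x i - N`; summed
over `j`, the multiple is `‖x i - N‖ * (∑ u j / ‖x i - x j‖ - 2 ⟪x i - N, T⟫)` with `T` the
original sum, and after scaling by `v i` everything is killed by the first equation and by
`u i • T = 0`. -/

open EuclideanGeometry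

section UnitInversion

variable {E : Type*} [NormedAddCommGroup E] [InnerProductSpace ℝ E] {c x x' : E}

theorem inversion_one_eq (c x : E) : inversion c 1 x = (‖x - c‖ ^ 2)⁻¹ • (x - c) + c := by
  simp [inversion_def, dist_eq_norm, one_div, inv_pow]

theorem norm_inversion_one_sub_center (c x : E) : ‖inversion c 1 x - c‖ = ‖x - c‖⁻¹ := by
  simpa [dist_eq_norm] using dist_inversion_center c x 1

theorem norm_inversion_one_sub_inversion_one (hx : x ≠ c) (hx' : x' ≠ c) :
    ‖inversion c 1 x - inversion c 1 x'‖ = ‖x - x'‖ / (‖x - c‖ * ‖x' - c‖) := by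
  rw [← dist_eq_norm, dist_inversion_inversion hx hx', dist_eq_norm, dist_eq_norm, dist_eq_norm]
  ring

theorem inv_norm_mul_div_norm_inversion_one_sub (hx : x ≠ c) (hx' : x' ≠ c) (u : ℝ) :
    ‖x' - c‖⁻¹ * u / ‖inversion c 1 x - inversion c 1 x'‖ = ‖x - c‖ * (u / ‖x - x'‖) := by
  rw [norm_inversion_one_sub_inversion_one hx hx']
  rcases eq_or_ne x x' with rfl | hxx'
  · simp
  field_simp [norm_ne_zero_iff.2 (sub_ne_zero.2 hx), norm_ne_zero_iff.2 (sub_ne_zero.2 hx'),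
    norm_ne_zero_iff.2 (sub_ne_zero.2 hxx')]

theorem inv_norm_mul_div_norm_inversion_one_sub_pow_three_smul (hx : x ≠ c) (hx' : x' ≠ c)
    (u : ℝ) :
    (‖x' - c‖⁻¹ * u / ‖inversion c 1 x - inversion c 1 x'‖ ^ 3) •
        (inversion c 1 x - inversion c 1 x') =
      ‖x - c‖ ^ 3 • ((u / ‖x - x'‖ ^ 3) • (x - x')) +
        (‖x - c‖ * (u / ‖x - x'‖) -
          2 * ‖x - c‖ * inner ℝ (x - c) ((u / ‖x - x'‖ ^ 3) • (x - x'))) • (x - c) := by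
  rcases eq_or_ne x x' with rfl | hxx'
  · simp
  have hx0 : ‖x - c‖ ≠ 0 := norm_ne_zero_iff.2 (sub_ne_zero.2 hx)
  have hx'0 : ‖x' - c‖ ≠ 0 := norm_ne_zero_iff.2 (sub_ne_zero.2 hx')
  have hxx'0 : ‖x - x'‖ ≠ 0 := norm_ne_zero_iff.2 (sub_ne_zero.2 hxx')
  have hinner : inner ℝ (x - c) (x - x') = (‖x - c‖ ^ 2 + ‖x - x'‖ ^ 2 - ‖x' - c‖ ^ 2) / 2 := by
    rw [← sub_sub_sub_cancel_right x x' c, norm_sub_sq_real (x - c), inner_sub_right,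
      real_inner_self_eq_norm_sq]
    ring
  have hdiff : inversion c 1 x - inversion c 1 x' =
      (‖x' - c‖ ^ 2)⁻¹ • (x - x') + ((‖x - c‖ ^ 2)⁻¹ - (‖x' - c‖ ^ 2)⁻¹) • (x - c) := by
    rw [inversion_one_eq, inversion_one_eq, ← sub_sub_sub_cancel_right x x' c]
    module
  rw [norm_inversion_one_sub_inversion_one hx hx', real_inner_smul_right, hinner, hdiff]
  match_scalars <;> field_simp <;> ring

open Finset in
theorem sum_inv_norm_mul_div_norm_inversion_one_sub_pow_three_smul {ι : Type*} (s : Finset ι)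
    {x : ι → E} (hx : ∀ j, x j ≠ c) (u : ι → ℝ) (i : ι) :
    ∑ j ∈ s, (‖x j - c‖⁻¹ * u j / ‖inversion c 1 (x i) - inversion c 1 (x j)‖ ^ 3) •
        (inversion c 1 (x i) - inversion c 1 (x j)) =
      ‖x i - c‖ ^ 3 • ∑ j ∈ s, (u j / ‖x i - x j‖ ^ 3) • (x i - x j) +
        (‖x i - c‖ * ∑ j ∈ s, u j / ‖x i - x j‖ -
          2 * ‖x i - c‖ * inner ℝ (x i - c) (∑ j ∈ s, (u j / ‖x i - x j‖ ^ 3) • (x i - x j))) •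
          (x i - c) := by
  rw [smul_sum, mul_sum, inner_sum, mul_sum, ← sum_sub_distrib, sum_smul, ← sum_add_distrib]
  exact sum_congr rfl fun j _ =>
    inv_norm_mul_div_norm_inversion_one_sub_pow_three_smul (hx i) (hx j) (u j)

end UnitInversion

open Finset in
theorem stmt_14_general (m p : ℕ) (N : EuclideanSpace ℝ (Fin m))
    (x : Fin p → EuclideanSpace ℝ (Fin m))
    (hN : ∀ i, x i ≠ N)
    (y : Fin p → EuclideanSpace ℝ (Fin m))
    (hy : ∀ i, y i = (‖x i - N‖ ^ 2)⁻¹ • (x i - N))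
    (u v : Fin p → ℝ) (hv : ∀ i, v i = ‖y i‖ * u i)
    (h1 : ∀ i, ∑ j ∈ univ \ {i}, u j / ‖x i - x j‖ = 0)
    (h2 : ∀ i, u i • ∑ j ∈ univ \ {i},
        (u j / ‖x i - x j‖ ^ 3) • (x i - x j) = 0) :
    (∀ i, ∑ j ∈ univ \ {i}, v j / ‖y i - y j‖ = 0) ∧
    (∀ i, v i • ∑ j ∈ univ \ {i},
        (v j / ‖y i - y j‖ ^ 3) • (y i - y j) = 0) := by
  have hy_sub : ∀ i j, y i - y j = inversion N 1 (x i) - inversion N 1 (x j) := fun i j => by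
    rw [hy, hy, inversion_one_eq, inversion_one_eq, add_sub_add_right_eq_sub]
  have hv_inv : ∀ i, v i = ‖x i - N‖⁻¹ * u i := fun i => by
    rw [hv, hy, ← add_sub_cancel_right ((‖x i - N‖ ^ 2)⁻¹ • (x i - N)) N, ← inversion_one_eq,
      norm_inversion_one_sub_center]
  refine ⟨fun i => ?_, fun i => ?_⟩
  · simp_rw [hy_sub, hv_inv, inv_norm_mul_div_norm_inversion_one_sub (hN i) (hN _), ← mul_sum,
      h1 i, mul_zero]
  · simp_rw [hy_sub, hv_inv, sum_inv_norm_mul_div_norm_inversion_one_sub_pow_three_smul _ hN,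
      h1 i, mul_zero, zero_sub]
    set T := ∑ j ∈ univ \ {i}, (u j / ‖x i - x j‖ ^ 3) • (x i - x j)
    have hT : u i • T = 0 := h2 i
    have hinner : u i * inner ℝ (x i - N) T = 0 := by
      rw [← real_inner_smul_right, hT, inner_zero_right]
    calc _ = ‖x i - N‖ ^ 2 • (u i • T) - (2 * (u i * inner ℝ (x i - N) T)) • (x i - N) := by
          have hx0 : ‖x i - N‖ ≠ 0 := norm_ne_zero_iff.2 (sub_ne_zero.2 (hN i))
          match_scalars <;> field_simp
      _ = 0 := by rw [hT, hinner]; simp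

open Finset in
theorem stmt_14 (m p : ℕ) (N : EuclideanSpace ℝ (Fin m))
    (x : Fin p → EuclideanSpace ℝ (Fin m))
    (hinj : Function.Injective x) (hN : ∀ i, x i ≠ N)
    (y : Fin p → EuclideanSpace ℝ (Fin m))
    (hy : ∀ i, y i = (‖x i - N‖ ^ 2)⁻¹ • (x i - N))
    (u v : Fin p → ℝ) (hv : ∀ i, v i = ‖y i‖ * u i)
    (h1 : ∀ i, ∑ j ∈ univ \ {i}, u j / ‖x i - x j‖ = 0)
    (h2 : ∀ i, u i • ∑ j ∈ univ \ {i},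
        (u j / ‖x i - x j‖ ^ 3) • (x i - x j) = 0) :
    (∀ i, ∑ j ∈ univ \ {i}, v j / ‖y i - y j‖ = 0) ∧
    (∀ i, v i • ∑ j ∈ univ \ {i},
        (v j / ‖y i - y j‖ ^ 3) • (y i - y j) = 0) :=
  stmt_14_general m p N x hN y hy u v hv h1 h2
end

section
/- If x₁,…,x₄ ∈ ℝ³ are distinct points, u₁,…,u₄ are all nonzero, and for each i the vector equation Σ_{j≠i} (x_i - x_j)/|x_i - x_j|³ · u_j = 0 holds, then x₁, x₂, x₃, x₄ are coplanar (lie in a common 2-dimensional affine subspace). -/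
/-!
The equation at `x₀` reads `∑_{j ≠ 0} cⱼ • (x₀ - xⱼ) = 0` with `cⱼ = uⱼ / ‖x₀ - xⱼ‖³`, and `c₃ ≠ 0`.
Solving it for `x₀ - x₃` puts `x₃` in the plane through `x₀, x₁, x₂`; this is the coordinate-free
form of pairing the equation with a normal of that plane.
-/

theorem mem_affineSpan_of_sum_smul_vsub_eq_zero {k V P ι : Type*} [Field k] [AddCommGroup V]
    [Module k V] [AddTorsor V P] [DecidableEq ι] {s : Finset ι} {c : ι → k} {p : P} {y : ι → P}
    (h : ∑ j ∈ s, c j • (p -ᵥ y j) = 0) {i : ι} (hi : i ∈ s) (hc : c i ≠ 0) :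
    y i ∈ affineSpan k (insert p (y '' ↑(s.erase i))) := by
  set A := affineSpan k (insert p (y '' ↑(s.erase i)))
  have hp : p ∈ A := mem_affineSpan k (Set.mem_insert p _)
  have hmem : ∀ j ∈ s.erase i, p -ᵥ y j ∈ A.direction := fun j hj => by
    rw [direction_affineSpan]
    exact vsub_mem_vectorSpan k (Set.mem_insert p _)
      (Set.mem_insert_of_mem p (Set.mem_image_of_mem y hj))
  have hsmul : c i • (p -ᵥ y i) = -∑ j ∈ s.erase i, c j • (p -ᵥ y j) := by
    rw [eq_neg_iff_add_eq_zero, Finset.add_sum_erase s (fun j => c j • (p -ᵥ y j)) hi, h]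
  rw [← AffineSubspace.vsub_left_mem_direction_iff_mem hp,
    ← Submodule.smul_mem_iff _ hc, hsmul]
  exact A.direction.neg_mem (A.direction.sum_mem fun j hj => A.direction.smul_mem _ (hmem j hj))

open Finset in
theorem stmt_15 (x : Fin 4 → EuclideanSpace ℝ (Fin 3))
    (hinj : Function.Injective x)
    (u : Fin 4 → ℝ) (hu : ∀ i, u i ≠ 0)
    (h : ∀ i, ∑ j ∈ univ \ {i}, (u j / ‖x i - x j‖ ^ 3) • (x i - x j) = 0) :
    Module.finrank ℝ (vectorSpan ℝ (Set.range x)) ≤ 2 := by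
  have hweight : u 3 / ‖x 0 - x 3‖ ^ 3 ≠ 0 :=
    div_ne_zero (hu 3) <| pow_ne_zero 3 <|
      norm_ne_zero_iff.mpr (sub_ne_zero.mpr (hinj.ne (by decide)))
  have hx₃ : x 3 ∈ affineSpan ℝ {x 0, x 1, x 2} := by
    refine affineSpan_mono ℝ ?_
      (mem_affineSpan_of_sum_smul_vsub_eq_zero (h 0) (by decide) hweight)
    refine Set.insert_subset_insert ?_
    rintro _ ⟨j, hj, rfl⟩
    fin_cases j <;> simp at hj ⊢
  have hcoplanar : Coplanar ℝ (insert (x 3) {x 0, x 1, x 2}) :=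
    (coplanar_insert_iff_of_mem_affineSpan hx₃).mpr (coplanar_triple ℝ _ _ _)
  refine coplanar_iff_finrank_le_two.mp (hcoplanar.subset ?_)
  rintro _ ⟨j, rfl⟩
  fin_cases j <;> simp
end

section
/- If x₁,…,x₅ ∈ ℝ⁴ are distinct points, u₁,…,u₅ are all nonzero reals satisfying Σ_{j≠i} (x_i - x_j)/|x_i - x_j|³ · u_j = 0 for all 1 ≤ i ≤ 5, then the span of {x₁ - x_i : i = 2,…,5} has dimension at most 3, i.e., the five points lie in a common 3-dimensional affine subspace. -/
/-! The equation for `i = 0` is a linear relation among the four vectors `x 0 - x j`, `j ≠ 0`,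
with coefficients `u j / ‖x 0 - x j‖ ^ 3`, which are nonzero because the points are distinct.
So these four vectors are linearly dependent. -/

open Finset Module Submodule

theorem finrank_span_range_lt_card_of_sum_smul_eq_zero {R M ι : Type*} [Ring R] [Nontrivial R]
    [OrzechProperty R] [AddCommGroup M] [Module R M] [Fintype ι] {v : ι → M} {g : ι → R}
    (hrel : ∑ i, g i • v i = 0) {i₀ : ι} (hg : g i₀ ≠ 0) :
    finrank R (span R (Set.range v)) < Fintype.card ι := by
  have hdep : ¬ LinearIndependent R v := fun hli =>
    hg (Fintype.linearIndependent_iff.mp hli g hrel i₀)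
  exact not_le.mp (linearIndependent_iff_card_le_finrank_span.not.mp hdep)

theorem Fin.sum_sdiff_zero {M : Type*} [AddCommMonoid M] {n : ℕ} (f : Fin (n + 1) → M) :
    ∑ j ∈ univ \ {0}, f j = ∑ i : Fin n, f i.succ := by
  rw [sdiff_singleton_eq_erase, Fin.univ_succ, erase_cons, sum_map]
  rfl

open Finset in
theorem stmt_16 (x : Fin 5 → EuclideanSpace ℝ (Fin 4))
    (hinj : Function.Injective x)
    (u : Fin 5 → ℝ) (hu : ∀ i, u i ≠ 0)
    (h : ∀ i, ∑ j ∈ univ \ {i}, (u j / ‖x i - x j‖ ^ 3) • (x i - x j) = 0) :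
    Module.finrank ℝ
      (Submodule.span ℝ (Set.range fun i : Fin 4 => x 0 - x i.succ)) ≤ 3 := by
  have hrel : ∑ i : Fin 4, (u i.succ / ‖x 0 - x i.succ‖ ^ 3) • (x 0 - x i.succ) = 0 := by
    rw [← h 0, Fin.sum_sdiff_zero fun j => (u j / ‖x 0 - x j‖ ^ 3) • (x 0 - x j)]
  have hcoeff : u (1 : Fin 5) / ‖x 0 - x 1‖ ^ 3 ≠ 0 := by
    have hdist : ‖x 0 - x 1‖ ≠ 0 := by
      simpa [sub_eq_zero] using hinj.ne (by decide : (0 : Fin 5) ≠ 1)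
    exact div_ne_zero (hu 1) (pow_ne_zero 3 hdist)
  exact Nat.lt_succ_iff.mp
    (finrank_span_range_lt_card_of_sum_smul_eq_zero (i₀ := 0) hrel hcoeff)
end
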